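/- Let n ≥ 1, a > 0 and φ₀ ∈ 𝒮(ℝⁿ) with supp φ̂₀ ⊆ {ξ ∈ ℝⁿ : |ξ| < a}. Then for every N ≥ 0 and every a' > a there exists a constant C_N > 0 such that |(e^{−itH₀}φ₀)(x)| ≤ C_N ⟨t⟩^{−N} ⟨x⟩^{−N} for all (t,x) ∈ ℝ × ℝⁿ with |x| > a'|t|. -/

import Mathlib

open MeasureTheory Complex Filter Topology
open scoped Real

noncomputable section

/-- Euclidean space `ℝⁿ`. -/
abbrev Rn (n : ℕ) := EuclideanSpace ℝ (Fin n)

/-- The wave packet transform `W_φ f (x, ξ) = ∫ conj (φ (y - x)) f y e^{-i y·ξ} dy`. -/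
def WPT {n : ℕ} (φ f : Rn n → ℂ) (x ξ : Rn n) : ℂ :=
  ∫ y : Rn n, (starRingEnd ℂ) (φ (y - x)) * f y * Complex.exp (-(Complex.I) * ((inner ℝ y ξ : ℝ) : ℂ))

/-- The `L²` inner product `(f, g) = ∫ f conj g`. -/
def L2inner {n : ℕ} (f g : Rn n → ℂ) : ℂ := ∫ y : Rn n, f y * (starRingEnd ℂ) (g y)

/-- The inverse wave packet transform
`W⁻¹_{ψ,φ} F (x) = (2π)^{-n} (ψ,φ)⁻¹ ∫∫ ψ(x-y) F(y,ξ) e^{i x·ξ} dy dξ`. -/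
def WPTinv {n : ℕ} (ψ φ : Rn n → ℂ) (F : Rn n × Rn n → ℂ) (x : Rn n) : ℂ :=
  (((2 * Real.pi) ^ n : ℝ) : ℂ)⁻¹ * (L2inner ψ φ)⁻¹ *
    ∫ p : Rn n × Rn n, ψ (x - p.1) * F p * Complex.exp (Complex.I * ((inner ℝ x p.2 : ℝ) : ℂ))

/-- The Fourier transform `𝓕u(ξ) = (2π)^{-n/2} ∫ e^{-i x·ξ} u(x) dx`. -/
def FT {n : ℕ} (u : Rn n → ℂ) (ξ : Rn n) : ℂ :=
  (((2 * Real.pi) ^ (-(n : ℝ) / 2) : ℝ) : ℂ) *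
    ∫ x : Rn n, Complex.exp (-(Complex.I) * ((inner ℝ x ξ : ℝ) : ℂ)) * u x

/-- The inverse Fourier transform `𝓕⁻¹u(x) = (2π)^{-n/2} ∫ e^{i x·ξ} u(ξ) dξ`. -/
def FTinv {n : ℕ} (u : Rn n → ℂ) (x : Rn n) : ℂ :=
  (((2 * Real.pi) ^ (-(n : ℝ) / 2) : ℝ) : ℂ) *
    ∫ ξ : Rn n, Complex.exp (Complex.I * ((inner ℝ x ξ : ℝ) : ℂ)) * u ξ

/-- The free Schrödinger propagator `e^{-itH₀} φ = 𝓕⁻¹[e^{-it|ξ|²/2} 𝓕φ]`, `H₀ = -Δ/2`. -/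
def freeProp {n : ℕ} (t : ℝ) (φ : Rn n → ℂ) : Rn n → ℂ :=
  FTinv (fun ξ => Complex.exp (-(Complex.I) * t * (((‖ξ‖ : ℝ) ^ 2 : ℝ) : ℂ) / 2) * FT φ ξ)

/-- The Japanese bracket `⟨s⟩ = (1 + s²)^{1/2}` of a real number. -/
def jap (s : ℝ) : ℝ := Real.sqrt (1 + s ^ 2)

/-- The Japanese bracket `⟨x⟩ = (1 + |x|²)^{1/2}` of a vector. -/
def japV {n : ℕ} (x : Rn n) : ℝ := Real.sqrt (1 + ‖x‖ ^ 2)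

/-- Assumption (A_L): `V_L` is `C⁴` on `ℝ × ℝⁿ` and
`|∂_x^α V_L(t,x)| ≤ C_α ⟨x⟩^{-δ-|α|}` for all `|α| ≤ 4`. -/
def AssumptionAL {n : ℕ} (VL : ℝ → Rn n → ℝ) (δ : ℝ) : Prop :=
  ContDiff ℝ 4 (fun p : ℝ × Rn n => VL p.1 p.2) ∧
  ∀ k : ℕ, k ≤ 4 → ∃ C : ℝ, 0 < C ∧ ∀ (t : ℝ) (x : Rn n),
    ‖iteratedFDeriv ℝ k (fun y => VL t y) x‖ ≤ C * japV x ^ (-(δ + (k : ℝ)))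

/-- The phase space region `Γ_{a,R} = {(x,ξ) : a < |ξ| < R, |x| < R}`. -/
def Gamma {n : ℕ} (a R : ℝ) : Set (Rn n × Rn n) :=
  {p | a < ‖p.2‖ ∧ ‖p.2‖ < R ∧ ‖p.1‖ < R}

structure Tm17 where
  c : ℕ
  p : ℕ
  s : ℕ
  q : ℕ
  r : ℕ

def stepT17 (τ : Tm17) : List Tm17 :=
  [⟨τ.c, τ.p, τ.s, τ.q+1, τ.r+1⟩, ⟨τ.c*(τ.r+1), τ.p+1, τ.s+1, τ.q, τ.r+2⟩]

def LT17 : ℕ → List Tm17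
  | 0 => [⟨1,0,0,0,0⟩]
  | (k+1) => (LT17 k).flatMap stepT17

namespace Stmt17

variable {n : ℕ}

def GG (t : ℝ) (x ξ : Rn n) : ℝ := ‖x‖^2 - t * (inner ℝ x ξ : ℝ)

def ph (t : ℝ) (x ξ : Rn n) : ℝ := (inner ℝ x ξ : ℝ) - t * ‖ξ‖^2/2

def EE (t : ℝ) (x ξ : Rn n) : ℂ := Complex.exp (Complex.I * ((ph t x ξ : ℝ) : ℂ))

def DQ (ψ : Rn n → ℂ) (x : Rn n) (q : ℕ) (ξ : Rn n) : ℂ :=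
  iteratedFDeriv ℝ q ψ ξ (fun _ => x)

def val (ψ : Rn n → ℂ) (t : ℝ) (x : Rn n) (τ : Tm17) (ξ : Rn n) : ℂ :=
  (τ.c : ℂ) * (t:ℂ)^τ.p * ((‖x‖ : ℝ):ℂ)^(2*τ.s) * (((GG t x ξ : ℝ):ℂ))⁻¹^τ.r * DQ ψ x τ.q ξ

variable {a a' : ℝ} {ψ : Rn n → ℂ} {t : ℝ} {x : Rn n}

lemma itf_zero (hψ0 : ∀ ξ : Rn n, a ≤ ‖ξ‖ → ψ ξ = 0) (q : ℕ) (ξ : Rn n) (hξ : a < ‖ξ‖) :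
    iteratedFDeriv ℝ q ψ ξ = 0 := by
  have hts : tsupport ψ ⊆ Metric.closedBall 0 a := by
    apply closure_minimal _ Metric.isClosed_closedBall
    intro y hy
    simp only [Function.mem_support] at hy
    simp only [Metric.mem_closedBall, dist_zero_right]
    by_contra h
    exact hy (hψ0 y (le_of_lt (not_le.mp h)))
  by_contra h
  have : ξ ∈ tsupport ψ := support_iteratedFDeriv_subset q (by simpa using h)
  have := hts this
  simp only [Metric.mem_closedBall, dist_zero_right] at this
  linarith

lemma DQ_zero (hψ0 : ∀ ξ : Rn n, a ≤ ‖ξ‖ → ψ ξ = 0) (q : ℕ) (ξ : Rn n) (hξ : a < ‖ξ‖) :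
    DQ ψ x q ξ = 0 := by
  unfold DQ
  rw [itf_zero hψ0 q ξ hξ]
  rfl

lemma val_zero (hψ0 : ∀ ξ : Rn n, a ≤ ‖ξ‖ → ψ ξ = 0) (τ : Tm17) (ξ : Rn n) (hξ : a < ‖ξ‖) :
    val ψ t x τ ξ = 0 := by
  unfold val
  rw [DQ_zero hψ0 τ.q ξ hξ, mul_zero]

lemma GG_lb (ha : 0 < a) (haa' : a < a') (hadm : a' * |t| < ‖x‖) (ξ : Rn n) (hξ : ‖ξ‖ ≤ a) :
    (1 - a/a') * ‖x‖^2 ≤ GG t x ξ := by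
  have ha'0 : 0 < a' := lt_trans ha haa'
  have hx : 0 < ‖x‖ := lt_of_le_of_lt (by positivity) hadm
  have h1 : |t * (inner ℝ x ξ : ℝ)| ≤ |t| * (‖x‖ * ‖ξ‖) := by
    rw [abs_mul]
    exact mul_le_mul_of_nonneg_left (abs_real_inner_le_norm x ξ) (abs_nonneg t)
  have h2 : t * (inner ℝ x ξ : ℝ) ≤ |t| * (‖x‖ * a) := by
    calc t * (inner ℝ x ξ : ℝ) ≤ |t * (inner ℝ x ξ : ℝ)| := le_abs_self _
    _ ≤ |t| * (‖x‖ * ‖ξ‖) := h1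
    _ ≤ |t| * (‖x‖ * a) := by
        apply mul_le_mul_of_nonneg_left _ (abs_nonneg t)
        exact mul_le_mul_of_nonneg_left hξ (norm_nonneg x)
  have h3 : |t| * a' ≤ ‖x‖ := by nlinarith [abs_nonneg t]
  have ha' : 0 < a' := lt_trans ha haa'
  have h4 : |t| * (‖x‖ * a) ≤ (a/a') * ‖x‖^2 := by
    rw [div_mul_eq_mul_div, le_div_iff₀ ha']
    nlinarith [mul_le_mul_of_nonneg_right h3 (mul_nonneg ha.le (norm_nonneg x))]
  unfold GG
  nlinarith

lemma GG_pos (ha : 0 < a) (haa' : a < a') (hadm : a' * |t| < ‖x‖) (ξ : Rn n) (hξ : ‖ξ‖ ≤ a) :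
    0 < GG t x ξ := by
  have ha'0 : 0 < a' := lt_trans ha haa'
  have hx : 0 < ‖x‖ := lt_of_le_of_lt (by positivity) hadm
  have h0 : 0 < (1 - a/a') := by
    have ha' : 0 < a' := lt_trans ha haa'
    have : a / a' < 1 := (div_lt_one ha').mpr haa'
    linarith
  exact lt_of_lt_of_le (by positivity) (GG_lb ha haa' hadm ξ hξ)


lemma inv_pow_eq_zpow (z : ℂ) (r : ℕ) : (z⁻¹)^r = z ^ (-(r:ℤ)) := by
  rw [inv_pow, ← zpow_natCast, ← zpow_neg]

lemma inv_pow_eq_zpow' (z : ℂ) (r : ℕ) : (z⁻¹)^(r+1) = z ^ (-(r:ℤ)-1) := by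
  rw [inv_pow_eq_zpow]
  congr 1
  push_cast
  ring

lemma val_hasFDerivAt (ha : 0 < a) (haa' : a < a') (hψ : ContDiff ℝ ((⊤:ℕ∞)) ψ)
    (hψ0 : ∀ ξ : Rn n, a ≤ ‖ξ‖ → ψ ξ = 0) (hadm : a' * |t| < ‖x‖) (τ : Tm17) (ξ : Rn n) :
    ∃ L : Rn n →L[ℝ] ℂ, HasFDerivAt (val ψ t x τ) L ξ ∧
      L x = val ψ t x ⟨τ.c, τ.p, τ.s, τ.q+1, τ.r⟩ ξ +
            val ψ t x ⟨τ.c*τ.r, τ.p+1, τ.s+1, τ.q, τ.r+1⟩ ξ := by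
  rcases lt_or_ge a ‖ξ‖ with hc | hc
  · have hev : val ψ t x τ =ᶠ[𝓝 ξ] (fun _ => 0) := by
      have hmem : {y : Rn n | a < ‖y‖} ∈ 𝓝 ξ :=
        (isOpen_lt continuous_const continuous_norm).mem_nhds hc
      filter_upwards [hmem] with y hy
      exact val_zero hψ0 τ y hy
    refine ⟨0, ?_, ?_⟩
    · exact (hasFDerivAt_const (0:ℂ) ξ).congr_of_eventuallyEq hev
    · rw [val_zero hψ0 _ ξ hc, val_zero hψ0 _ ξ hc]
      simp
  · have hGpos := GG_pos ha haa' hadm ξ hc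
    have hGne : ((GG t x ξ : ℝ) : ℂ) ≠ 0 := by
      simp only [ne_eq, Complex.ofReal_eq_zero]
      exact ne_of_gt hGpos
    have hG' : HasFDerivAt (GG t x) (-(t • (innerSL ℝ x : Rn n →L[ℝ] ℝ))) ξ := by
      have h1 : HasFDerivAt (fun y : Rn n => t * ((innerSL ℝ x) y))
          (t • (innerSL ℝ x : Rn n →L[ℝ] ℝ)) ξ := (innerSL ℝ x).hasFDerivAt.const_mul t
      have h2 := h1.const_sub (‖x‖^2)
      exact h2
    have hg : HasFDerivAt (fun y : Rn n => ((GG t x y : ℝ) : ℂ))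
        (Complex.ofRealCLM.comp (-(t • (innerSL ℝ x : Rn n →L[ℝ] ℝ)))) ξ :=
      Complex.ofRealCLM.hasFDerivAt.comp ξ hG'
    have hpow : HasFDerivAt (fun y : Rn n => ((GG t x y : ℝ) : ℂ) ^ (-(τ.r:ℤ)))
        (((((-(τ.r:ℤ)) : ℤ) : ℂ) * ((GG t x ξ : ℝ):ℂ) ^ ((-(τ.r:ℤ))-1)) •
          (Complex.ofRealCLM.comp (-(t • (innerSL ℝ x : Rn n →L[ℝ] ℝ))))) ξ :=
      by have := (hasDerivAt_zpow (-(τ.r:ℤ)) _ (Or.inl hGne)).comp_hasFDerivAt ξ hg; exact this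
    have hitf : HasFDerivAt (iteratedFDeriv ℝ τ.q ψ) (fderiv ℝ (iteratedFDeriv ℝ τ.q ψ) ξ) ξ :=
      (((hψ.iteratedFDeriv_right (m := (⊤:ℕ∞)) (by exact_mod_cast le_top)).differentiable (by simp)) ξ).hasFDerivAt
    have hDQ : HasFDerivAt (DQ ψ x τ.q)
        ((ContinuousMultilinearMap.apply ℝ (fun _ : Fin τ.q => Rn n) ℂ (fun _ => x)).comp
          (fderiv ℝ (iteratedFDeriv ℝ τ.q ψ) ξ)) ξ :=
      ((ContinuousMultilinearMap.apply ℝ (fun _ : Fin τ.q => Rn n) ℂ (fun _ => x)).hasFDerivAt).comp ξ hitf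
    have hmain := ((hpow.mul hDQ).const_mul ((τ.c : ℂ) * (t:ℂ)^τ.p * ((‖x‖ : ℝ):ℂ)^(2*τ.s)))
    have heq : (fun y : Rn n => (τ.c : ℂ) * (t:ℂ)^τ.p * ((‖x‖ : ℝ):ℂ)^(2*τ.s) *
        (((GG t x y : ℝ):ℂ) ^ (-(τ.r:ℤ)) * DQ ψ x τ.q y)) = val ψ t x τ := by
      funext y
      unfold val
      rw [inv_pow_eq_zpow]
      ring
    simp only [Pi.mul_apply] at hmain
    rw [show (fun y : Rn n => (τ.c : ℂ) * (t:ℂ)^τ.p * ((‖x‖ : ℝ):ℂ)^(2*τ.s) *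
        (((GG t x y : ℝ):ℂ) ^ (-(τ.r:ℤ)) * DQ ψ x τ.q y)) = val ψ t x τ from heq] at hmain
    refine ⟨_, hmain, ?_⟩
    have hDQ1 : (fderiv ℝ (iteratedFDeriv ℝ τ.q ψ) ξ x) (fun _ : Fin τ.q => x)
        = DQ ψ x (τ.q+1) ξ := by
      unfold DQ
      rw [iteratedFDeriv_succ_apply_left]
      rfl
    simp only [ContinuousLinearMap.coe_smul', Pi.smul_apply, ContinuousLinearMap.add_apply,
      ContinuousLinearMap.comp_apply, ContinuousLinearMap.neg_apply,
      ContinuousLinearMap.smul_apply, innerSL_apply_apply, Complex.ofRealCLM_apply, smul_eq_mul,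
      ContinuousMultilinearMap.apply_apply]
    rw [hDQ1]
    unfold val
    rw [inv_pow_eq_zpow, inv_pow_eq_zpow']
    have hxx : (inner ℝ x x : ℝ) = ‖x‖^2 := real_inner_self_eq_norm_sq x
    rw [hxx]
    push_cast
    ring


lemma val_continuous (ha : 0 < a) (haa' : a < a') (hψ : ContDiff ℝ ((⊤:ℕ∞)) ψ)
    (hψ0 : ∀ ξ : Rn n, a ≤ ‖ξ‖ → ψ ξ = 0) (hadm : a' * |t| < ‖x‖) (τ : Tm17) :
    Continuous (val ψ t x τ) := by
  have hDQcont : Continuous (DQ ψ x τ.q) := by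
    have h1 : Continuous (iteratedFDeriv ℝ τ.q ψ) :=
      (((hψ.iteratedFDeriv_right (m := (⊤:ℕ∞)) (by exact_mod_cast le_top)).differentiable (by simp))).continuous
    exact ((ContinuousMultilinearMap.apply ℝ (fun _ : Fin τ.q => Rn n) ℂ
      (fun _ => x)).continuous).comp h1
  have hGc : Continuous (fun y : Rn n => ((GG t x y : ℝ) : ℂ)) := by
    unfold GG
    have : Continuous (fun y : Rn n => (inner ℝ x y : ℝ)) := (innerSL ℝ x).continuous
    fun_prop
  rw [continuous_iff_continuousAt]
  intro ξ
  rcases lt_or_ge a ‖ξ‖ with hc | hc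
  · have hmem : {y : Rn n | a < ‖y‖} ∈ 𝓝 ξ :=
      (isOpen_lt continuous_const continuous_norm).mem_nhds hc
    have hev : val ψ t x τ =ᶠ[𝓝 ξ] (fun _ => 0) := by
      filter_upwards [hmem] with y hy
      exact val_zero hψ0 τ y hy
    exact ContinuousAt.congr continuousAt_const hev.symm
  · have hGne : ((GG t x ξ : ℝ) : ℂ) ≠ 0 := by
      simp only [ne_eq, Complex.ofReal_eq_zero]
      exact ne_of_gt (GG_pos ha haa' hadm ξ hc)
    unfold val
    exact (continuousAt_const.mul ((hGc.continuousAt.inv₀ hGne).pow τ.r)).mul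
      hDQcont.continuousAt

lemma EE_continuous : Continuous (EE t x (n := n)) := by
  unfold EE ph
  have : Continuous (fun y : Rn n => (inner ℝ x y : ℝ)) := (innerSL ℝ x).continuous
  fun_prop

lemma EE_norm (ξ : Rn n) : ‖EE t x ξ‖ = 1 := by
  unfold EE
  rw [Complex.norm_exp]
  simp

lemma EE_hasFDerivAt (ξ : Rn n) :
    ∃ L : Rn n →L[ℝ] ℂ, HasFDerivAt (EE t x) L ξ ∧
      L x = Complex.I * ((GG t x ξ : ℝ) : ℂ) * EE t x ξ := by
  have hn2 : HasFDerivAt (fun y : Rn n => ‖y‖^2) (2 • (innerSL ℝ ξ : Rn n →L[ℝ] ℝ)) ξ := by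
    have := (hasFDerivAt_id ξ).norm_sq
    simpa using this
  have hph : HasFDerivAt (ph t x)
      ((innerSL ℝ x : Rn n →L[ℝ] ℝ) - (t/2) • (2 • (innerSL ℝ ξ : Rn n →L[ℝ] ℝ))) ξ := by
    have h1 : HasFDerivAt (fun y : Rn n => (inner ℝ x y : ℝ)) (innerSL ℝ x : Rn n →L[ℝ] ℝ) ξ :=
      (innerSL ℝ x).hasFDerivAt
    have h2 : HasFDerivAt (fun y : Rn n => t * ‖y‖^2 / 2)
        ((t/2) • (2 • (innerSL ℝ ξ : Rn n →L[ℝ] ℝ))) ξ := by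
      have h3 := hn2.const_mul (t/2)
      have : (fun y : Rn n => t * ‖y‖^2 / 2) = (fun y : Rn n => (t/2) * ‖y‖^2) := by
        funext y; ring
      rw [this]
      exact h3
    exact h1.sub h2
  have hphc : HasFDerivAt (fun y : Rn n => ((ph t x y : ℝ) : ℂ))
      (Complex.ofRealCLM.comp ((innerSL ℝ x : Rn n →L[ℝ] ℝ) - (t/2) • (2 • (innerSL ℝ ξ : Rn n →L[ℝ] ℝ)))) ξ :=
    Complex.ofRealCLM.hasFDerivAt.comp ξ hph
  have hmul := hphc.const_mul Complex.I
  have hexp := hmul.cexp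
  refine ⟨_, hexp, ?_⟩
  simp only [ContinuousLinearMap.coe_smul', Pi.smul_apply, ContinuousLinearMap.comp_apply,
    ContinuousLinearMap.sub_apply, ContinuousLinearMap.smul_apply, innerSL_apply_apply,
    Complex.ofRealCLM_apply, smul_eq_mul]
  unfold EE GG
  have hxx : (inner ℝ ξ x : ℝ) = (inner ℝ x ξ : ℝ) := real_inner_comm x ξ
  have hxx2 : (inner ℝ x x : ℝ) = ‖x‖^2 := real_inner_self_eq_norm_sq x
  simp only [hxx, hxx2]
  push_cast
  ring


lemma mulval_integrable (ha : 0 < a) (haa' : a < a') (hψ : ContDiff ℝ ((⊤:ℕ∞)) ψ)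
    (hψ0 : ∀ ξ : Rn n, a ≤ ‖ξ‖ → ψ ξ = 0) (hadm : a' * |t| < ‖x‖) (τ : Tm17)
    (f : Rn n → ℂ) (hf : Continuous f) :
    Integrable (fun ξ : Rn n => f ξ * val ψ t x τ ξ) := by
  apply Continuous.integrable_of_hasCompactSupport
  · exact hf.mul (val_continuous ha haa' hψ hψ0 hadm τ)
  · apply HasCompactSupport.intro (isCompact_closedBall (0 : Rn n) a)
    intro ξ hξ
    simp only [Metric.mem_closedBall, dist_zero_right, not_le] at hξ
    rw [val_zero hψ0 τ ξ hξ, mul_zero]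

lemma val_G (ha : 0 < a) (haa' : a < a') (hψ0 : ∀ ξ : Rn n, a ≤ ‖ξ‖ → ψ ξ = 0)
    (hadm : a' * |t| < ‖x‖) (τ : Tm17) (ξ : Rn n) :
    ((GG t x ξ : ℝ) : ℂ) * val ψ t x ⟨τ.c, τ.p, τ.s, τ.q, τ.r+1⟩ ξ = val ψ t x τ ξ := by
  rcases lt_or_ge a ‖ξ‖ with hc | hc
  · rw [val_zero hψ0 _ ξ hc, val_zero hψ0 _ ξ hc, mul_zero]
  · have hGne : ((GG t x ξ : ℝ) : ℂ) ≠ 0 := by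
      simp only [ne_eq, Complex.ofReal_eq_zero]
      exact ne_of_gt (GG_pos ha haa' hadm ξ hc)
    unfold val
    simp only []
    have := mul_inv_cancel₀ hGne
    linear_combination ((τ.c:ℂ) * (t:ℂ)^τ.p * ((‖x‖:ℝ):ℂ)^(2*τ.s) * (((GG t x ξ:ℝ):ℂ)⁻¹)^τ.r * DQ ψ x τ.q ξ) * this

/-- The key integration-by-parts step. -/
lemma ibp_step (ha : 0 < a) (haa' : a < a') (hψ : ContDiff ℝ ((⊤:ℕ∞)) ψ)
    (hψ0 : ∀ ξ : Rn n, a ≤ ‖ξ‖ → ψ ξ = 0) (hadm : a' * |t| < ‖x‖) (τ : Tm17) :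
    ∫ ξ : Rn n, EE t x ξ * val ψ t x τ ξ =
      Complex.I * ((∫ ξ : Rn n, EE t x ξ * val ψ t x ⟨τ.c, τ.p, τ.s, τ.q+1, τ.r+1⟩ ξ) +
        ∫ ξ : Rn n, EE t x ξ * val ψ t x ⟨τ.c*(τ.r+1), τ.p+1, τ.s+1, τ.q, τ.r+2⟩ ξ) := by
  classical
  set τ1 : Tm17 := ⟨τ.c, τ.p, τ.s, τ.q, τ.r+1⟩ with hτ1
  have hval := fun ξ => val_hasFDerivAt ha haa' hψ hψ0 hadm τ1 ξ
  have hEder := fun ξ => EE_hasFDerivAt (t := t) (x := x) (ξ := ξ)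
  have hdiffv : Differentiable ℝ (val ψ t x τ1) := fun ξ => (hval ξ).choose_spec.1.differentiableAt
  have hdiffE : Differentiable ℝ (EE t x) := fun ξ => (hEder ξ).choose_spec.1.differentiableAt
  have hfdv : ∀ ξ, fderiv ℝ (val ψ t x τ1) ξ x =
      val ψ t x ⟨τ.c, τ.p, τ.s, τ.q+1, τ.r+1⟩ ξ +
      val ψ t x ⟨τ.c*(τ.r+1), τ.p+1, τ.s+1, τ.q, τ.r+2⟩ ξ := by
    intro ξ
    obtain ⟨L, hL, hLx⟩ := hval ξ
    rw [hL.fderiv]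
    simpa using hLx
  have hfdE : ∀ ξ, fderiv ℝ (EE t x) ξ x = Complex.I * ((GG t x ξ : ℝ) : ℂ) * EE t x ξ := by
    intro ξ
    obtain ⟨L, hL, hLx⟩ := hEder ξ
    rw [hL.fderiv]
    exact hLx
  have hGcont : Continuous (fun y : Rn n => ((GG t x y : ℝ) : ℂ)) := by
    unfold GG
    have : Continuous (fun y : Rn n => (inner ℝ x y : ℝ)) := (innerSL ℝ x).continuous
    fun_prop
  have int1 : Integrable (fun ξ : Rn n => fderiv ℝ (EE t x) ξ x * val ψ t x τ1 ξ) := by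
    have : (fun ξ : Rn n => fderiv ℝ (EE t x) ξ x * val ψ t x τ1 ξ)
        = fun ξ : Rn n => (Complex.I * ((GG t x ξ : ℝ) : ℂ) * EE t x ξ) * val ψ t x τ1 ξ := by
      funext ξ; rw [hfdE ξ]
    rw [this]
    exact mulval_integrable ha haa' hψ hψ0 hadm τ1 _
      ((continuous_const.mul hGcont).mul EE_continuous)
  have int2 : Integrable (fun ξ : Rn n => EE t x ξ * fderiv ℝ (val ψ t x τ1) ξ x) := by
    have : (fun ξ : Rn n => EE t x ξ * fderiv ℝ (val ψ t x τ1) ξ x)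
        = fun ξ : Rn n => EE t x ξ * val ψ t x ⟨τ.c, τ.p, τ.s, τ.q+1, τ.r+1⟩ ξ +
            EE t x ξ * val ψ t x ⟨τ.c*(τ.r+1), τ.p+1, τ.s+1, τ.q, τ.r+2⟩ ξ := by
      funext ξ; rw [hfdv ξ]; ring
    rw [this]
    exact (mulval_integrable ha haa' hψ hψ0 hadm _ _ EE_continuous).add
      (mulval_integrable ha haa' hψ hψ0 hadm _ _ EE_continuous)
  have int3 : Integrable (fun ξ : Rn n => EE t x ξ * val ψ t x τ1 ξ) :=
    mulval_integrable ha haa' hψ hψ0 hadm τ1 _ EE_continuous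
  have ibp := integral_mul_fderiv_eq_neg_fderiv_mul_of_integrable int1 int2 int3 (fun ξ _ => hdiffE ξ) (fun ξ _ => hdiffv ξ)
  -- transform LHS
  have hlhs : ∫ ξ : Rn n, EE t x ξ * fderiv ℝ (val ψ t x τ1) ξ x =
      (∫ ξ : Rn n, EE t x ξ * val ψ t x ⟨τ.c, τ.p, τ.s, τ.q+1, τ.r+1⟩ ξ) +
        ∫ ξ : Rn n, EE t x ξ * val ψ t x ⟨τ.c*(τ.r+1), τ.p+1, τ.s+1, τ.q, τ.r+2⟩ ξ := by
    rw [show (fun ξ : Rn n => EE t x ξ * fderiv ℝ (val ψ t x τ1) ξ x)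
        = fun ξ : Rn n => EE t x ξ * val ψ t x ⟨τ.c, τ.p, τ.s, τ.q+1, τ.r+1⟩ ξ +
            EE t x ξ * val ψ t x ⟨τ.c*(τ.r+1), τ.p+1, τ.s+1, τ.q, τ.r+2⟩ ξ from
        funext fun ξ => by rw [hfdv ξ]; ring]
    exact integral_add (mulval_integrable ha haa' hψ hψ0 hadm _ _ EE_continuous)
      (mulval_integrable ha haa' hψ hψ0 hadm _ _ EE_continuous)
  have hrhs : ∫ ξ : Rn n, fderiv ℝ (EE t x) ξ x * val ψ t x τ1 ξ =
      Complex.I * ∫ ξ : Rn n, EE t x ξ * val ψ t x τ ξ := by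
    rw [show (fun ξ : Rn n => fderiv ℝ (EE t x) ξ x * val ψ t x τ1 ξ)
        = fun ξ : Rn n => Complex.I • (EE t x ξ * val ψ t x τ ξ) from funext fun ξ => by
      rw [smul_eq_mul, hfdE ξ, ← val_G ha haa' hψ0 hadm τ ξ]; ring]
    rw [integral_smul, smul_eq_mul]
  rw [hlhs, hrhs] at ibp
  rw [ibp]
  ring_nf
  rw [Complex.I_sq]
  ring


/-- The sum of integrals over the term list. -/
def sumJ (ψ : Rn n → ℂ) (t : ℝ) (x : Rn n) (k : ℕ) : ℂ :=
  ((LT17 k).map (fun τ => ∫ ξ : Rn n, EE t x ξ * val ψ t x τ ξ)).sum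

lemma sumJ_zero : sumJ ψ t x 0 = ∫ ξ : Rn n, EE t x ξ * ψ ξ := by
  unfold sumJ LT17
  simp only [List.map_cons, List.map_nil, List.sum_cons, List.sum_nil, add_zero]
  congr 1
  funext ξ
  unfold val DQ
  simp [iteratedFDeriv_zero_apply]

lemma sumJ_succ (ha : 0 < a) (haa' : a < a') (hψ : ContDiff ℝ ((⊤:ℕ∞)) ψ)
    (hψ0 : ∀ ξ : Rn n, a ≤ ‖ξ‖ → ψ ξ = 0) (hadm : a' * |t| < ‖x‖) (k : ℕ) :
    sumJ ψ t x k = Complex.I * sumJ ψ t x (k+1) := by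
  unfold sumJ
  show ((LT17 k).map (fun τ => ∫ ξ : Rn n, EE t x ξ * val ψ t x τ ξ)).sum
    = Complex.I * (((LT17 k).flatMap stepT17).map (fun τ => ∫ ξ : Rn n, EE t x ξ * val ψ t x τ ξ)).sum
  induction (LT17 k) with
  | nil => simp
  | cons τ l ih =>
    simp only [List.map_cons, List.sum_cons, List.flatMap_cons, List.map_append, List.sum_append]
    rw [ih]
    have hstep := ibp_step ha haa' hψ hψ0 hadm τ
    rw [hstep]
    unfold stepT17
    simp only [List.map_cons, List.map_nil, List.sum_cons, List.sum_nil, add_zero]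
    ring

lemma sumJ_norm (ha : 0 < a) (haa' : a < a') (hψ : ContDiff ℝ ((⊤:ℕ∞)) ψ)
    (hψ0 : ∀ ξ : Rn n, a ≤ ‖ξ‖ → ψ ξ = 0) (hadm : a' * |t| < ‖x‖) (k : ℕ) :
    ‖∫ ξ : Rn n, EE t x ξ * ψ ξ‖ = ‖sumJ ψ t x k‖ := by
  induction k with
  | zero => rw [sumJ_zero]
  | succ k ih =>
    rw [ih, sumJ_succ ha haa' hψ hψ0 hadm k, norm_mul, Complex.norm_I, one_mul]

lemma LT17_invariant : ∀ k : ℕ, ∀ τ ∈ LT17 k, τ.p + 2*τ.s + τ.q + k = 2*τ.r := by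
  intro k
  induction k with
  | zero =>
    intro τ hτ
    unfold LT17 at hτ
    simp only [List.mem_singleton] at hτ
    subst hτ
    rfl
  | succ k ih =>
    intro τ hτ
    unfold LT17 at hτ
    rw [List.mem_flatMap] at hτ
    obtain ⟨σ, hσ, hmem⟩ := hτ
    have hs := ih σ hσ
    unfold stepT17 at hmem
    simp only [List.mem_cons, List.mem_singleton, List.not_mem_nil, or_false] at hmem
    rcases hmem with h | h <;> subst h <;> simp <;> omega



lemma list_norm_sum_le (l : List ℂ) : ‖l.sum‖ ≤ (l.map (fun z => ‖z‖)).sum := by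
  induction l with
  | nil => simp
  | cons z l ih =>
    simp only [List.sum_cons, List.map_cons]
    exact (norm_add_le _ _).trans (by linarith)

lemma DQ_bound (q : ℕ) (ξ : Rn n) (M : ℝ) (hM : ‖iteratedFDeriv ℝ q ψ ξ‖ ≤ M) :
    ‖DQ ψ x q ξ‖ ≤ M * ‖x‖^q := by
  unfold DQ
  calc ‖(iteratedFDeriv ℝ q ψ ξ) (fun _ => x)‖
      ≤ ‖iteratedFDeriv ℝ q ψ ξ‖ * ∏ _i : Fin q, ‖x‖ :=
        (iteratedFDeriv ℝ q ψ ξ).le_opNorm _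
    _ = ‖iteratedFDeriv ℝ q ψ ξ‖ * ‖x‖^q := by
        rw [Finset.prod_const, Finset.card_univ, Fintype.card_fin]
    _ ≤ M * ‖x‖^q := by
        apply mul_le_mul_of_nonneg_right hM (by positivity)

lemma core (ha : 0 < a) (haa' : a < a') (hψ : ContDiff ℝ ((⊤:ℕ∞)) ψ)
    (hψ0 : ∀ ξ : Rn n, a ≤ ‖ξ‖ → ψ ξ = 0) (k : ℕ) :
    ∃ C : ℝ, 0 < C ∧ ∀ (t : ℝ) (x : Rn n), a' * |t| < ‖x‖ →
      ‖∫ ξ : Rn n, EE t x ξ * ψ ξ‖ * ‖x‖^k ≤ C := by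
  classical
  have ha'0 : 0 < a' := lt_trans ha haa'
  have hc₀ : 0 < 1 - a/a' := by
    have : a / a' < 1 := (div_lt_one ha'0).mpr haa'
    linarith
  set c₀ : ℝ := 1 - a/a' with hc₀def
  -- bounds on iterated derivatives
  have hMex : ∀ q : ℕ, ∃ M : ℝ, 0 ≤ M ∧ ∀ ξ : Rn n, ‖iteratedFDeriv ℝ q ψ ξ‖ ≤ M := by
    intro q
    have hψcs : HasCompactSupport ψ := by
      apply HasCompactSupport.intro (isCompact_closedBall (0 : Rn n) a)
      intro ξ hξ
      simp only [Metric.mem_closedBall, dist_zero_right, not_le] at hξ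
      exact hψ0 ξ hξ.le
    have hcs : HasCompactSupport (iteratedFDeriv ℝ q ψ) := hψcs.iteratedFDeriv q
    have hcont : Continuous (iteratedFDeriv ℝ q ψ) :=
      (((hψ.iteratedFDeriv_right (m := (⊤:ℕ∞)) (by exact_mod_cast le_top)).differentiable (by simp))).continuous
    obtain ⟨M, hMb⟩ := hcs.exists_bound_of_continuous hcont
    exact ⟨max M 0, le_max_right _ _, fun ξ => le_trans (hMb ξ) (le_max_left _ _)⟩
  choose M hM0 hMb using hMex
  set V : ℝ := (volume (Metric.closedBall (0:Rn n) a)).toReal with hVdef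
  have hV : 0 ≤ V := ENNReal.toReal_nonneg
  set K : Tm17 → ℝ := fun τ => ((τ.c : ℝ) * (a'⁻¹)^τ.p * M τ.q * (c₀⁻¹)^τ.r) * V with hKdef
  have hK0 : ∀ τ, 0 ≤ K τ := by
    intro τ
    apply mul_nonneg _ hV
    have h1 : (0:ℝ) ≤ (τ.c : ℝ) := Nat.cast_nonneg _
    have h2 : (0:ℝ) ≤ (a'⁻¹)^τ.p := by positivity
    have h4 : (0:ℝ) ≤ (c₀⁻¹)^τ.r := by positivity
    have := hM0 τ.q
    positivity
  refine ⟨((LT17 k).map K).sum + 1, ?_, ?_⟩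
  · have : 0 ≤ ((LT17 k).map K).sum := by
      apply List.sum_nonneg
      intro y hy
      obtain ⟨τ, _, rfl⟩ := List.mem_map.mp hy
      exact hK0 τ
    linarith
  intro t x hadm
  have hx : 0 < ‖x‖ := lt_of_le_of_lt (by positivity) hadm
  -- single-term bound
  have hterm : ∀ τ ∈ LT17 k,
      ‖∫ ξ : Rn n, EE t x ξ * val ψ t x τ ξ‖ * ‖x‖^k ≤ K τ := by
    intro τ hτ
    have hinv := LT17_invariant k τ hτ
    set w := ‖x‖ with hwdef
    set B' : ℝ := (τ.c : ℝ) * (a'⁻¹)^τ.p * M τ.q * (c₀⁻¹)^τ.r with hB'def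
    have hB'0 : 0 ≤ B' := by
      have h1 := hM0 τ.q
      positivity
    -- pointwise bound
    have hpt : ∀ ξ ∈ Metric.closedBall (0:Rn n) a,
        ‖EE t x ξ * val ψ t x τ ξ‖ ≤ B' / w^k := by
      intro ξ hξ
      simp only [Metric.mem_closedBall, dist_zero_right] at hξ
      have hGlb := GG_lb ha haa' hadm ξ hξ
      have hGpos := GG_pos ha haa' hadm ξ hξ
      have ht' : |t| ≤ w * a'⁻¹ := by
        have h1 : a' * |t| ≤ w := hadm.le
        calc |t| = (a' * |t|) * a'⁻¹ := by field_simp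
        _ ≤ w * a'⁻¹ := mul_le_mul_of_nonneg_right h1 (by positivity)
      rw [le_div_iff₀ (by positivity : (0:ℝ) < w^k), norm_mul, EE_norm, one_mul]
      have hnv : ‖val ψ t x τ ξ‖
          = (τ.c : ℝ) * |t|^τ.p * w^(2*τ.s) * ((GG t x ξ)⁻¹)^τ.r * ‖DQ ψ x τ.q ξ‖ := by
        unfold val
        rw [norm_mul, norm_mul, norm_mul, norm_mul, norm_pow, norm_pow, norm_pow, norm_inv,
          Complex.norm_natCast, Complex.norm_real, Complex.norm_real, Complex.norm_real,
          Real.norm_eq_abs, Real.norm_eq_abs, Real.norm_eq_abs,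
          _root_.abs_of_nonneg (norm_nonneg x), _root_.abs_of_pos hGpos]
      rw [hnv]
      have hDQb : ‖DQ ψ x τ.q ξ‖ ≤ M τ.q * w^τ.q := DQ_bound τ.q ξ (M τ.q) (hMb τ.q ξ)
      have hGinv : (GG t x ξ)⁻¹ ≤ (c₀ * w^2)⁻¹ := by
        apply inv_anti₀ (by positivity)
        rw [hc₀def]
        exact hGlb
      calc (τ.c : ℝ) * |t|^τ.p * w^(2*τ.s) * ((GG t x ξ)⁻¹)^τ.r * ‖DQ ψ x τ.q ξ‖ * w^k
          ≤ (τ.c : ℝ) * (w*a'⁻¹)^τ.p * w^(2*τ.s) * ((c₀*w^2)⁻¹)^τ.r * (M τ.q * w^τ.q) * w^k := by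
            have h1 : |t|^τ.p ≤ (w*a'⁻¹)^τ.p := pow_le_pow_left₀ (abs_nonneg t) ht' τ.p
            have h2 : ((GG t x ξ)⁻¹)^τ.r ≤ ((c₀*w^2)⁻¹)^τ.r :=
              pow_le_pow_left₀ (inv_nonneg.mpr hGpos.le) hGinv τ.r
            have hg0 : (0:ℝ) ≤ (GG t x ξ)⁻¹ := inv_nonneg.mpr hGpos.le
            have hDQ0 : (0:ℝ) ≤ ‖DQ ψ x τ.q ξ‖ := norm_nonneg _
            gcongr
        _ = B' := by
            rw [hB'def]
            have hw2 : w^τ.p * w^(2*τ.s) * w^τ.q * w^k = (w^2)^τ.r := by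
              rw [← pow_add, ← pow_add, ← pow_add,
                show τ.p + 2*τ.s + τ.q + k = 2*τ.r from hinv, pow_mul]
            rw [mul_pow w a'⁻¹ τ.p, mul_inv (c₀) (w^2), mul_pow (c₀⁻¹) ((w^2)⁻¹) τ.r,
              inv_pow (w^2) τ.r, ← hw2]
            have hwne : w ≠ 0 := ne_of_gt hx
            field_simp
    -- integral bound
    have hzero : ∀ ξ ∉ Metric.closedBall (0:Rn n) a, EE t x ξ * val ψ t x τ ξ = 0 := by
      intro ξ hξ
      simp only [Metric.mem_closedBall, dist_zero_right, not_le] at hξ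
      rw [val_zero hψ0 τ ξ hξ, mul_zero]
    have hint : (∫ ξ : Rn n, EE t x ξ * val ψ t x τ ξ)
        = ∫ ξ in Metric.closedBall (0:Rn n) a, EE t x ξ * val ψ t x τ ξ :=
      (setIntegral_eq_integral_of_forall_compl_eq_zero hzero).symm
    have hb : ‖∫ ξ in Metric.closedBall (0:Rn n) a, EE t x ξ * val ψ t x τ ξ‖
        ≤ (B' / w^k) * V := by
      rw [hVdef]
      exact norm_setIntegral_le_of_norm_le_const measure_closedBall_lt_top
        hpt
    rw [hint]
    calc ‖∫ ξ in Metric.closedBall (0:Rn n) a, EE t x ξ * val ψ t x τ ξ‖ * w^k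
        ≤ ((B' / w^k) * V) * w^k := mul_le_mul_of_nonneg_right hb (by positivity)
      _ = B' * V := by field_simp
      _ = K τ := by rw [hKdef, hB'def]
  -- sum up
  have hnorm := sumJ_norm ha haa' hψ hψ0 hadm k
  have hsum : ‖sumJ ψ t x k‖ ≤ ((LT17 k).map
      (fun τ => ‖∫ ξ : Rn n, EE t x ξ * val ψ t x τ ξ‖)).sum := by
    unfold sumJ
    calc ‖((LT17 k).map (fun τ => ∫ ξ : Rn n, EE t x ξ * val ψ t x τ ξ)).sum‖
        ≤ (((LT17 k).map (fun τ => ∫ ξ : Rn n, EE t x ξ * val ψ t x τ ξ)).map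
            (fun z => ‖z‖)).sum := list_norm_sum_le _
      _ = ((LT17 k).map (fun τ => ‖∫ ξ : Rn n, EE t x ξ * val ψ t x τ ξ‖)).sum := by
          rw [List.map_map]; rfl
  calc ‖∫ ξ : Rn n, EE t x ξ * ψ ξ‖ * ‖x‖^k
      ≤ ((LT17 k).map (fun τ => ‖∫ ξ : Rn n, EE t x ξ * val ψ t x τ ξ‖)).sum * ‖x‖^k := by
        rw [hnorm]
        exact mul_le_mul_of_nonneg_right hsum (by positivity)
    _ = ((LT17 k).map (fun τ => ‖∫ ξ : Rn n, EE t x ξ * val ψ t x τ ξ‖ * ‖x‖^k)).sum := by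
        rw [← List.sum_map_mul_right]
    _ ≤ ((LT17 k).map K).sum := by
        apply List.sum_le_sum
        intro τ hτ
        exact hterm τ hτ
    _ ≤ ((LT17 k).map K).sum + 1 := by linarith


end Stmt17

open FourierTransform in
lemma FT_smooth {n : ℕ} (φ₀ : SchwartzMap (Rn n) ℂ) : ContDiff ℝ ((⊤:ℕ∞)) (FT (⇑φ₀)) := by
  have h1 : FT (⇑φ₀) = fun ξ : Rn n =>
      (((2 * Real.pi) ^ (-(n : ℝ) / 2) : ℝ) : ℂ) *
        (𝓕 (⇑φ₀ : Rn n → ℂ)) ((2*Real.pi)⁻¹ • ξ) := by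
    funext ξ
    unfold FT
    congr 1
    rw [Real.fourier_eq']
    congr 1
    funext v
    rw [smul_eq_mul]
    congr 1
    have hinner : (inner ℝ v ((2*Real.pi)⁻¹ • ξ) : ℝ) = (2*Real.pi)⁻¹ * (inner ℝ v ξ : ℝ) :=
      real_inner_smul_right v ξ _
    rw [hinner]
    have hπ : (2*Real.pi) ≠ 0 := by positivity
    have hr : -2*Real.pi*((2*Real.pi)⁻¹ * (inner ℝ v ξ:ℝ)) = -(inner ℝ v ξ:ℝ) := by
      field_simp
    rw [show (-2*Real.pi*((2*Real.pi)⁻¹ * (inner ℝ v ξ:ℝ))) = -(inner ℝ v ξ:ℝ) from hr]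
    push_cast
    ring
  rw [h1]
  apply ContDiff.mul contDiff_const
  have h2 : ContDiff ℝ ((⊤:ℕ∞)) (𝓕 (⇑φ₀ : Rn n → ℂ)) := by
    have h3 := (SchwartzMap.fourierTransformCLM ℂ φ₀).smooth ⊤
    rwa [SchwartzMap.fourierTransformCLM_apply, SchwartzMap.fourier_coe] at h3
  exact h2.comp (contDiff_const_smul _)


set_option maxHeartbeats 1000000 in
theorem stmt17 (n : ℕ) (hn : 1 ≤ n) (a : ℝ) (ha : 0 < a) (φ₀ : SchwartzMap (Rn n) ℂ)
    (hsupp : ∀ ξ : Rn n, a ≤ ‖ξ‖ → FT (⇑φ₀) ξ = 0) :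
    ∀ N : ℕ, ∀ a' : ℝ, a < a' → ∃ C : ℝ, 0 < C ∧
      ∀ (t : ℝ) (x : Rn n), a' * |t| < ‖x‖ →
        ‖freeProp t (⇑φ₀) x‖ ≤ C * jap t ^ (-(N : ℝ)) * japV x ^ (-(N : ℝ)) := by
  intro N a' haa'
  have ha'0 : 0 < a' := lt_trans ha haa'
  have hψ : ContDiff ℝ ((⊤:ℕ∞)) (FT (⇑φ₀)) := FT_smooth φ₀
  obtain ⟨C2, hC2pos, hC2⟩ := Stmt17.core ha haa' hψ hsupp (2*N)
  obtain ⟨C0, hC0pos, hC0⟩ := Stmt17.core ha haa' hψ hsupp 0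
  set cn : ℝ := (2 * Real.pi) ^ (-(n : ℝ) / 2) with hcn
  have hcn0 : 0 < cn := Real.rpow_pos_of_pos (by positivity) _
  set B : ℝ := Real.sqrt (2 * (1 + (a'⁻¹)^2)) with hB
  have hB0 : 0 < B := Real.sqrt_pos.mpr (by positivity)
  refine ⟨cn * B^N * (C2 + C0) + 1, by positivity, ?_⟩
  intro t x hadm
  have hx : 0 < ‖x‖ := lt_of_le_of_lt (by positivity) hadm
  have hfp : ‖freeProp t (⇑φ₀) x‖
      = cn * ‖∫ ξ : Rn n, Stmt17.EE t x ξ * FT (⇑φ₀) ξ‖ := by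
    have heq : freeProp t (⇑φ₀) x
        = ((cn:ℝ):ℂ) * ∫ ξ : Rn n, Stmt17.EE t x ξ * FT (⇑φ₀) ξ := by
      unfold freeProp FTinv Stmt17.EE Stmt17.ph
      rw [hcn]
      congr 1
      congr 1
      funext ξ
      rw [← mul_assoc, ← Complex.exp_add]
      congr 2
      push_cast
      ring
    rw [heq, norm_mul, Complex.norm_real, Real.norm_eq_abs, _root_.abs_of_pos hcn0]
  have hjt : 0 < jap t := Real.sqrt_pos.mpr (by positivity)
  have hjx : 0 < japV x := Real.sqrt_pos.mpr (by positivity)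
  rw [Real.rpow_neg hjt.le, Real.rpow_natCast, Real.rpow_neg hjx.le, Real.rpow_natCast,
    show (cn * B^N * (C2+C0) + 1) * (jap t ^ N)⁻¹ * (japV x ^ N)⁻¹
      = (cn * B^N * (C2+C0) + 1) / (jap t ^ N * japV x ^ N) from by
        rw [div_eq_mul_inv, mul_inv, mul_assoc],
    le_div_iff₀ (by positivity)]
  have ht2 : t^2 ≤ ‖x‖^2 * (a'⁻¹)^2 := by
    have h1 : a' * |t| ≤ ‖x‖ := hadm.le
    have h2 : (a' * |t|)^2 ≤ ‖x‖^2 := pow_le_pow_left₀ (by positivity) h1 2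
    calc t^2 = (a'*|t|)^2 * (a'⁻¹)^2 := by
          rw [mul_pow, _root_.sq_abs]
          field_simp
      _ ≤ ‖x‖^2 * (a'⁻¹)^2 := by gcongr
  have hJ0 : (0:ℝ) ≤ ‖∫ ξ : Rn n, Stmt17.EE t x ξ * FT (⇑φ₀) ξ‖ := norm_nonneg _
  rcases le_or_gt ‖x‖ 1 with hx1 | hx1
  · have hJ : ‖∫ ξ : Rn n, Stmt17.EE t x ξ * FT (⇑φ₀) ξ‖ ≤ C0 := by
      have := hC0 t x hadm
      simpa using this
    have hx2 : ‖x‖^2 ≤ 1 := by nlinarith [norm_nonneg x]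
    have hjap2 : (jap t * japV x)^2 ≤ B^2 := by
      have e1 : (jap t * japV x)^2 = (1+t^2) * (1+‖x‖^2) := by
        unfold jap japV
        rw [mul_pow, Real.sq_sqrt (by positivity), Real.sq_sqrt (by positivity)]
      have e2 : B^2 = 2*(1+a'⁻¹^2) := by
        rw [hB]
        exact Real.sq_sqrt (by positivity)
      rw [e1, e2]
      nlinarith [ht2, hx2, sq_nonneg t, sq_nonneg a'⁻¹,
        mul_le_mul_of_nonneg_right hx2 (sq_nonneg a'⁻¹),
        mul_le_mul_of_nonneg_right hx2 (sq_nonneg t)]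
    have hjap : jap t * japV x ≤ B :=
      (pow_le_pow_iff_left₀ (by positivity) hB0.le two_ne_zero).mp hjap2
    calc ‖freeProp t (⇑φ₀) x‖ * (jap t ^ N * japV x ^ N)
        = cn * ‖∫ ξ : Rn n, Stmt17.EE t x ξ * FT (⇑φ₀) ξ‖ * (jap t * japV x)^N := by
          rw [hfp, mul_pow]
      _ ≤ cn * C0 * B^N := by
          have h1 : (jap t * japV x)^N ≤ B^N :=
            pow_le_pow_left₀ (by positivity) hjap N
          have h2 := mul_le_mul (mul_le_mul_of_nonneg_left hJ hcn0.le) h1 (by positivity)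
            (by positivity)
          linarith [h2]
      _ ≤ cn * B^N * (C2 + C0) + 1 := by
          have h3 : cn * C0 * B^N ≤ cn * B^N * (C2 + C0) := by
            have : C0 ≤ C2 + C0 := by linarith
            calc cn * C0 * B^N = cn * B^N * C0 := by ring
              _ ≤ cn * B^N * (C2 + C0) := by
                apply mul_le_mul_of_nonneg_left this (by positivity)
          linarith
  · have hJ : ‖∫ ξ : Rn n, Stmt17.EE t x ξ * FT (⇑φ₀) ξ‖ * ‖x‖^(2*N) ≤ C2 :=
      hC2 t x hadm
    have hjap : jap t * japV x ≤ B * ‖x‖^2 := by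
      have hx2 : (1:ℝ) ≤ ‖x‖^2 := by nlinarith
      have hjap2 : (jap t * japV x)^2 ≤ (B * ‖x‖^2)^2 := by
        have e1 : (jap t * japV x)^2 = (1+t^2) * (1+‖x‖^2) := by
          unfold jap japV
          rw [mul_pow, Real.sq_sqrt (by positivity), Real.sq_sqrt (by positivity)]
        have e2 : (B * ‖x‖^2)^2 = 2*(1+a'⁻¹^2) * (‖x‖^2*‖x‖^2) := by
          rw [mul_pow, hB, Real.sq_sqrt (by positivity)]
          ring
        rw [e1, e2]
        nlinarith [ht2, hx2, sq_nonneg t, sq_nonneg a'⁻¹, sq_nonneg ‖x‖,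
          mul_le_mul_of_nonneg_right ht2 (sq_nonneg ‖x‖),
          mul_le_mul_of_nonneg_right hx2 (sq_nonneg ‖x‖),
          mul_le_mul_of_nonneg_right hx2 (mul_nonneg (sq_nonneg ‖x‖) (sq_nonneg a'⁻¹))]
      exact (pow_le_pow_iff_left₀ (by positivity) (by positivity) two_ne_zero).mp hjap2
    calc ‖freeProp t (⇑φ₀) x‖ * (jap t ^ N * japV x ^ N)
        = cn * ‖∫ ξ : Rn n, Stmt17.EE t x ξ * FT (⇑φ₀) ξ‖ * (jap t * japV x)^N := by
          rw [hfp, mul_pow]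
      _ ≤ cn * ‖∫ ξ : Rn n, Stmt17.EE t x ξ * FT (⇑φ₀) ξ‖ * (B * ‖x‖^2)^N := by
          have h1 : (jap t * japV x)^N ≤ (B * ‖x‖^2)^N :=
            pow_le_pow_left₀ (by positivity) hjap N
          apply mul_le_mul_of_nonneg_left h1 (by positivity)
      _ = cn * B^N * (‖∫ ξ : Rn n, Stmt17.EE t x ξ * FT (⇑φ₀) ξ‖ * ‖x‖^(2*N)) := by
          rw [mul_pow, pow_mul]
          ring
      _ ≤ cn * B^N * C2 := by
          apply mul_le_mul_of_nonneg_left hJ (by positivity)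
      _ ≤ cn * B^N * (C2 + C0) + 1 := by
          have : cn * B^N * C2 ≤ cn * B^N * (C2 + C0) := by
            apply mul_le_mul_of_nonneg_left (by linarith) (by positivity)
          linarith
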